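/- arXiv:2504.05431 — 3 statements merged into one kernel-verified Lean document; each statement's English description precedes it below -/
import Mathlib

section
/- Second moment of the hyperbolic secant-type bound: for h(t) = −log(2cosh(√t/2)), the second derivative satisfies 0 < h''(t) ≤ 1/96 for all t > 0. In particular h''(t) ≤ 1 for all t > 0. -/
/-! With `x = √t / 2` one finds `h''(t) = (sinh x cosh x - x) / (64 x³ cosh² x)`. Positivity is
`x < sinh x ≤ sinh x cosh x`. The bound is `sinh x cosh x - x ≤ (2/3) x³ cosh² x`, which, like
`sinh x ≤ x cosh x`, holds because the difference of the two sides vanishes at `0` and has a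
nonnegative derivative on `[0, ∞)`; the constant `1/96` is the limit of `h''` at `0`. -/

open Real Set Filter Topology

noncomputable def ssgTypeII (t : ℝ) : ℝ := -log (2 * cosh (√t / 2))

section Inequalities

variable {x : ℝ}

lemma apply_zero_le_of_hasDerivAt_nonneg {F F' : ℝ → ℝ} (hF : ∀ y, HasDerivAt F (F' y) y)
    (hF' : ∀ y, 0 < y → 0 ≤ F' y) (hx : 0 ≤ x) : F 0 ≤ F x := by
  refine monotoneOn_of_deriv_nonneg (convex_Ici 0)
    (fun y _ ↦ (hF y).continuousAt.continuousWithinAt)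
    (fun y _ ↦ (hF y).differentiableAt.differentiableWithinAt) (fun y hy ↦ ?_)
    self_mem_Ici hx hx
  rw [interior_Ici, mem_Ioi] at hy
  exact (hF y).deriv ▸ hF' y hy

lemma sinh_le_mul_cosh (hx : 0 ≤ x) : sinh x ≤ x * cosh x := by
  have hF (y : ℝ) : HasDerivAt (fun y ↦ y * cosh y - sinh y) (y * sinh y) y := by
    refine (((hasDerivAt_id y).mul (hasDerivAt_cosh y)).sub (hasDerivAt_sinh y)).congr_deriv ?_
    simp
  have := apply_zero_le_of_hasDerivAt_nonneg hF (fun y hy ↦ by positivity) hx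
  simp only [zero_mul, sinh_zero, sub_zero] at this
  linarith

lemma sinh_mul_cosh_sub_self_le (hx : 0 ≤ x) :
    sinh x * cosh x - x ≤ 2 / 3 * x ^ 3 * cosh x ^ 2 := by
  have hF (y : ℝ) : HasDerivAt (fun y ↦ 2 / 3 * y ^ 3 * cosh y ^ 2 - sinh y * cosh y + y)
      (2 * ((y * cosh y) ^ 2 - sinh y ^ 2) + 4 / 3 * y ^ 3 * sinh y * cosh y) y := by
    refine ((((hasDerivAt_pow 3 y).const_mul (2 / 3)).mul ((hasDerivAt_cosh y).pow 2)).sub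
      ((hasDerivAt_sinh y).mul (hasDerivAt_cosh y))).add (hasDerivAt_id y) |>.congr_deriv ?_
    simp only [Pi.pow_apply, Nat.cast_ofNat]
    linear_combination (-1 : ℝ) * cosh_sq_sub_sinh_sq y
  have hF' (y : ℝ) (hy : 0 < y) :
      0 ≤ 2 * ((y * cosh y) ^ 2 - sinh y ^ 2) + 4 / 3 * y ^ 3 * sinh y * cosh y := by
    have hsinh : 0 ≤ sinh y := sinh_nonneg_iff.mpr hy.le
    have hsq : sinh y ^ 2 ≤ (y * cosh y) ^ 2 := pow_le_pow_left₀ hsinh (sinh_le_mul_cosh hy.le) 2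
    have : 0 ≤ y ^ 3 * sinh y * cosh y := by positivity
    linarith
  have := apply_zero_le_of_hasDerivAt_nonneg hF hF' hx
  norm_num at this
  linarith

lemma self_lt_sinh_mul_cosh (hx : 0 < x) : x < sinh x * cosh x :=
  calc x < sinh x := self_lt_sinh_iff.mpr hx
    _ ≤ sinh x * cosh x := le_mul_of_one_le_right (sinh_pos_iff.mpr hx).le (one_le_cosh x)

lemma sinh_mul_cosh_sub_self_div_pos (hx : 0 < x) :
    0 < (sinh x * cosh x - x) / (64 * x ^ 3 * cosh x ^ 2) := by
  have := self_lt_sinh_mul_cosh hx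
  have := cosh_pos x
  apply div_pos <;> [linarith; positivity]

lemma sinh_mul_cosh_sub_self_div_le (hx : 0 < x) :
    (sinh x * cosh x - x) / (64 * x ^ 3 * cosh x ^ 2) ≤ 1 / 96 := by
  have := cosh_pos x
  rw [div_le_iff₀ (by positivity)]
  linarith [sinh_mul_cosh_sub_self_le hx.le]

end Inequalities

section Derivatives

variable {t : ℝ}

lemma hasDerivAt_sqrt_div_two (ht : 0 < t) : HasDerivAt (fun u ↦ √u / 2) (1 / (4 * √t)) t := by
  refine ((hasDerivAt_sqrt ht.ne').div_const 2).congr_deriv ?_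
  ring

lemma hasDerivAt_ssgTypeII (ht : 0 < t) :
    HasDerivAt ssgTypeII (-(sinh (√t / 2) / (cosh (√t / 2) * (4 * √t)))) t := by
  have hcosh : HasDerivAt (fun u ↦ cosh (√u / 2)) (sinh (√t / 2) * (1 / (4 * √t))) t :=
    (hasDerivAt_cosh _).comp t (hasDerivAt_sqrt_div_two ht)
  have := cosh_pos (√t / 2)
  refine ((hcosh.const_mul 2).log (by positivity)).neg.congr_deriv ?_
  field_simp

lemma hasDerivAt_deriv_ssgTypeII (ht : 0 < t) :
    HasDerivAt (deriv ssgTypeII)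
      ((sinh (√t / 2) * cosh (√t / 2) - √t / 2) / (64 * (√t / 2) ^ 3 * cosh (√t / 2) ^ 2)) t := by
  have hderiv : deriv ssgTypeII =ᶠ[𝓝 t]
      fun u ↦ -(sinh (√u / 2) / (cosh (√u / 2) * (4 * √u))) := by
    filter_upwards [Ioi_mem_nhds ht] with u hu
    exact (hasDerivAt_ssgTypeII hu).deriv
  have hsinh : HasDerivAt (fun u ↦ sinh (√u / 2)) (cosh (√t / 2) * (1 / (4 * √t))) t :=
    (hasDerivAt_sinh _).comp t (hasDerivAt_sqrt_div_two ht)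
  have hcosh : HasDerivAt (fun u ↦ cosh (√u / 2)) (sinh (√t / 2) * (1 / (4 * √t))) t :=
    (hasDerivAt_cosh _).comp t (hasDerivAt_sqrt_div_two ht)
  have hsqrt : HasDerivAt (fun u ↦ 4 * √u) (4 * (1 / (2 * √t))) t :=
    (hasDerivAt_sqrt ht.ne').const_mul 4
  have hden : HasDerivAt (fun u ↦ cosh (√u / 2) * (4 * √u)) _ t := hcosh.mul hsqrt
  have := sqrt_pos.mpr ht
  have := cosh_pos (√t / 2)
  refine HasDerivAt.congr_of_eventuallyEq ?_ hderiv
  refine (hsinh.div hden (by positivity)).neg.congr_deriv ?_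
  field_simp
  linear_combination (-128 * √t) * cosh_sq_sub_sinh_sq (√t / 2)

end Derivatives

/-- For `h(t) = -log(2cosh(√t/2))` the second derivative satisfies
`0 < h''(t) ≤ 1/96` for all `t > 0`; in particular `h''(t) ≤ 1`. -/
theorem typeII_ssg_second_deriv_bound :
    ∀ t : ℝ, 0 < t →
      0 < deriv (deriv (fun u : ℝ => -Real.log (2 * Real.cosh (Real.sqrt u / 2)))) t ∧
      deriv (deriv (fun u : ℝ => -Real.log (2 * Real.cosh (Real.sqrt u / 2)))) t ≤ 1 / 96 ∧
      deriv (deriv (fun u : ℝ => -Real.log (2 * Real.cosh (Real.sqrt u / 2)))) t ≤ 1 := by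
  intro t ht
  have hx : 0 < √t / 2 := by positivity
  have hle := sinh_mul_cosh_sub_self_div_le hx
  change 0 < deriv (deriv ssgTypeII) t ∧ deriv (deriv ssgTypeII) t ≤ 1 / 96 ∧
    deriv (deriv ssgTypeII) t ≤ 1
  rw [(hasDerivAt_deriv_ssgTypeII ht).deriv]
  exact ⟨sinh_mul_cosh_sub_self_div_pos hx, hle, hle.trans (by norm_num)⟩
end

section
/- Prior concentration for a multivariate Gaussian: let β ∼ N_p(μ, Σ) with Σ positive definite, let β₀ ∈ ℝ^p and c > 0. Then P(‖β − β₀‖₂ ≤ c) ≥ (2^{−p/2}/Γ(p/2+1)) · (c/√λ_max(Σ))^p · exp(−(Δ² + c²/λ_max(Σ))/2), where Δ² = ‖Σ^{−1/2}(β₀ − μ)‖₂² and λ_max(Σ) is the largest eigenvalue of Σ. -/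
/-!
Write `Q v = vᵀ Σ⁻¹ v`, `d = β₀ - μ` and `r = c / √λ_max(Σ)`. Since `‖v‖² ≤ λ_max(Σ) Q v`,
the ellipsoid `E = {x | Q (x - β₀) ≤ r²}` lies in the Euclidean ball of radius `c` around `β₀`,
so it suffices to bound the Gaussian mass of `E`. As `E` is symmetric about `β₀`, the density may be
replaced on `E` by its average with its reflection through `β₀`; by the parallelogram law
`Q (d + u) + Q (d - u) = 2 Q d + 2 Q u` and `cosh ≥ 1`, this average is at least
`exp (-(Q d + Q u) / 2) ≥ exp (-(Δ² + r²) / 2)` times the normalising constant. Finally `E` is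
the image of the ball of radius `r` under `Σ^{1/2}`, so its volume is
`√(det Σ) · r^p · π^{p/2} / Γ(p/2 + 1)`.
-/

open MeasureTheory Matrix

theorem QuadraticMap.two_mul_exp_le_exp_add_exp {M : Type*} [AddCommGroup M] [Module ℝ M]
    (Q : QuadraticMap ℝ M ℝ) (d u : M) :
    2 * Real.exp (-(Q d + Q u) / 2) ≤ Real.exp (-Q (d + u) / 2) + Real.exp (-Q (d - u) / 2) := by
  set a := -(Q d + Q u) / 2
  set b := polar Q d u / 2
  have hadd : -Q (d + u) / 2 = a + -b := by
    rw [QuadraticMap.map_add Q]; ring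
  have hsub : -Q (d - u) / 2 = a + b := by
    rw [sub_eq_add_neg, QuadraticMap.map_add Q, Q.map_neg, polar_neg_right]; ring
  calc 2 * Real.exp a ≤ 2 * Real.exp a * Real.cosh b :=
        le_mul_of_one_le_right (by positivity) (Real.one_le_cosh b)
    _ = _ := by rw [hadd, hsub, Real.cosh_eq, Real.exp_add, Real.exp_add]; ring

section Symmetrization

variable {G : Type*} [AddCommGroup G] [MeasurableSpace G] [MeasurableAdd G] [MeasurableNeg G]
  {μ : Measure G} [μ.IsAddLeftInvariant] [μ.IsNegInvariant]

theorem mul_measureReal_le_setIntegral_of_le_average_sub_left {f : G → ℝ} {K : Set G} {b : G}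
    {m : ℝ} (hK : MeasurableSet K) (hKμ : μ K ≠ ⊤) (hKb : (b - ·) ⁻¹' K = K)
    (hf : IntegrableOn f K μ) (hm : ∀ x ∈ K, m ≤ (f x + f (b - x)) / 2) :
    m * μ.real K ≤ ∫ x in K, f x ∂μ := by
  have hemb := (MeasurableEquiv.subLeft b).measurableEmbedding
  have hmp : MeasurePreserving (b - ·) μ μ :=
    ⟨hemb.measurable, Measure.map_sub_left_eq_self μ b⟩
  have hf' : IntegrableOn (fun x => f (b - x)) K μ := by
    simpa only [hKb, Function.comp_def] using (hmp.integrableOn_comp_preimage hemb).mpr hf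
  have hrefl : ∫ x in K, f (b - x) ∂μ = ∫ x in K, f x ∂μ := by
    conv_lhs => rw [← hKb]
    exact hmp.setIntegral_preimage_emb hemb f K
  calc m * μ.real K ≤ ∫ x in K, (f x + f (b - x)) / 2 ∂μ :=
        setIntegral_ge_of_const_le_real hK hKμ hm ((hf.add hf').div_const 2)
    _ = ∫ x in K, f x ∂μ := by rw [integral_div, integral_add hf hf', hrefl]; ring

end Symmetrization

theorem Real.sqrt_two_mul_pi_pow_mul (p : ℕ) (D : ℝ) :
    √((2 * Real.pi) ^ p * D) = 2 ^ ((p : ℝ) / 2) * √Real.pi ^ p * √D := by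
  rw [Real.sqrt_mul (by positivity), mul_pow, Real.sqrt_mul (by positivity)]
  simp only [Real.sqrt_eq_rpow, ← Real.rpow_natCast, ← Real.rpow_mul zero_le_two,
    ← Real.rpow_mul Real.pi_pos.le]
  ring_nf

section EuclideanBall

variable {n : Type*} [Fintype n]

theorem setOf_sqrt_sum_sq_sub_le_eq_preimage (a : n → ℝ) (r : ℝ) :
    {x : n → ℝ | √(∑ i, (x i - a i) ^ 2) ≤ r} =
      WithLp.toLp 2 ⁻¹' Metric.closedBall (WithLp.toLp 2 a : EuclideanSpace ℝ n) r := by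
  ext x
  simp [EuclideanSpace.dist_eq, Real.dist_eq, sq_abs]

theorem isCompact_setOf_sqrt_sum_sq_sub_le (a : n → ℝ) (r : ℝ) :
    IsCompact {x : n → ℝ | √(∑ i, (x i - a i) ^ 2) ≤ r} := by
  rw [setOf_sqrt_sum_sq_sub_le_eq_preimage]
  exact (PiLp.homeomorph 2 fun _ : n => ℝ).symm.isCompact_preimage.mpr (isCompact_closedBall _ _)

theorem volume_setOf_sqrt_sum_sq_sub_le [Nonempty n] (a : n → ℝ) (r : ℝ) :
    volume {x : n → ℝ | √(∑ i, (x i - a i) ^ 2) ≤ r} =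
      ENNReal.ofReal r ^ Fintype.card n *
        ENNReal.ofReal (√Real.pi ^ Fintype.card n / Real.Gamma (Fintype.card n / 2 + 1)) := by
  rw [setOf_sqrt_sum_sq_sub_le_eq_preimage, (PiLp.volume_preserving_toLp n).measure_preimage
    Metric.isClosed_closedBall.nullMeasurableSet, EuclideanSpace.volume_closedBall]

end EuclideanBall

namespace Matrix.PosDef

open scoped MatrixOrder

variable {n : Type*} [Fintype n] [DecidableEq n]

theorem inv_mul_dotProduct_self_le {S : Matrix n n ℝ} (hS : S.PosDef) {L : ℝ}
    (hL : ∀ i, hS.isHermitian.eigenvalues i ≤ L) (u : n → ℝ) :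
    L⁻¹ * (u ⬝ᵥ u) ≤ u ⬝ᵥ S⁻¹ *ᵥ u := by
  have hinv : ContinuousOn (fun x : ℝ => x⁻¹) (spectrum ℝ S) := continuousOn_inv₀.mono
    fun _ hx => ne_of_mem_of_not_mem hx (spectrum.zero_notMem ℝ hS.isUnit)
  have hle : algebraMap ℝ (Matrix n n ℝ) L⁻¹ ≤ S⁻¹ := by
    rw [nonsing_inv_eq_ringInverse, ← cfc_ringInverse_id (R := ℝ) S hS.isUnit,
      algebraMap_le_cfc_iff _ _ _ hinv, hS.isHermitian.spectrum_real_eq_range_eigenvalues]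
    rintro _ ⟨i, rfl⟩
    exact inv_anti₀ (hS.eigenvalues_pos i) (hL i)
  have := (Matrix.le_iff.mp hle).dotProduct_mulVec_nonneg u
  simp only [star_trivial, sub_mulVec, dotProduct_sub, Algebra.algebraMap_eq_smul_one,
    smul_mulVec, one_mulVec, dotProduct_smul, smul_eq_mul] at this
  linarith

theorem setOf_dotProduct_inv_mulVec_le_subset {S : Matrix n n ℝ} (hS : S.PosDef) {L : ℝ}
    (hL0 : 0 < L) (hL : ∀ i, hS.isHermitian.eigenvalues i ≤ L) (a : n → ℝ) {c : ℝ}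
    (hc : 0 ≤ c) :
    {x : n → ℝ | (x - a) ⬝ᵥ S⁻¹ *ᵥ (x - a) ≤ (c / √L) ^ 2} ⊆
      {x | √(∑ i, (x i - a i) ^ 2) ≤ c} := by
  intro x hx
  rw [Set.mem_ofPred_eq, div_pow, Real.sq_sqrt hL0.le, div_eq_inv_mul] at hx
  have hsum : ∑ i, (x i - a i) ^ 2 = (x - a) ⬝ᵥ (x - a) := by simp [dotProduct, sq]
  rw [Set.mem_ofPred_eq, Real.sqrt_le_left hc, hsum]
  exact le_of_mul_le_mul_left ((hS.inv_mul_dotProduct_self_le hL _).trans hx) (inv_pos.mpr hL0)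

theorem volume_setOf_dotProduct_mulVec_le [Nonempty n] {A : Matrix n n ℝ} (hA : A.PosDef)
    (a : n → ℝ) {r : ℝ} (hr : 0 ≤ r) :
    volume {x : n → ℝ | (x - a) ⬝ᵥ A *ᵥ (x - a) ≤ r ^ 2} =
      ENNReal.ofReal (√A.det)⁻¹ * (ENNReal.ofReal r ^ Fintype.card n *
        ENNReal.ofReal (√Real.pi ^ Fintype.card n / Real.Gamma (Fintype.card n / 2 + 1))) := by
  set R := CFC.sqrt A
  have hRR : R * R = A := CFC.sqrt_mul_sqrt_self A hA.posSemidef.nonneg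
  have hRT : Rᵀ = R := by
    rw [← conjTranspose_eq_transpose_of_trivial]
    exact (CFC.sqrt_nonneg A).posSemidef.isHermitian
  have hdet : R.det = √A.det := by simpa using hA.posSemidef.det_sqrt
  have hquad (v : n → ℝ) : v ⬝ᵥ A *ᵥ v = ∑ i, ((R *ᵥ v) i) ^ 2 := by
    rw [← hRR, ← mulVec_mulVec, dotProduct_mulVec, ← mulVec_transpose, hRT]
    simp [dotProduct, sq]
  have hset : {x : n → ℝ | (x - a) ⬝ᵥ A *ᵥ (x - a) ≤ r ^ 2} =
      toLin' R ⁻¹' {z | √(∑ i, (z i - (R *ᵥ a) i) ^ 2) ≤ r} := by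
    ext x
    simp only [Set.mem_ofPred_eq, Set.mem_preimage, toLin'_apply, Real.sqrt_le_left hr]
    rw [hquad, mulVec_sub]
    rfl
  have hdetpos : 0 < √A.det := Real.sqrt_pos.mpr hA.det_pos
  have hdet_ne : LinearMap.det (toLin' R) ≠ 0 := by rw [LinearMap.det_toLin', hdet]; positivity
  rw [hset, Measure.addHaar_preimage_linearMap _ hdet_ne, volume_setOf_sqrt_sum_sq_sub_le,
    LinearMap.det_toLin', hdet, abs_of_pos (inv_pos.mpr hdetpos)]

theorem exp_mul_measureReal_le_setIntegral_exp [Nonempty n] {A : Matrix n n ℝ} (hA : A.PosDef)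
    (a μ : n → ℝ) {r : ℝ} (hr : 0 ≤ r) :
    Real.exp (-((a - μ) ⬝ᵥ A *ᵥ (a - μ) + r ^ 2) / 2) *
        volume.real {x : n → ℝ | (x - a) ⬝ᵥ A *ᵥ (x - a) ≤ r ^ 2} ≤
      ∫ x in {x : n → ℝ | (x - a) ⬝ᵥ A *ᵥ (x - a) ≤ r ^ 2},
        Real.exp (-((x - μ) ⬝ᵥ A *ᵥ (x - μ)) / 2) := by
  set Q := A.toQuadraticForm'
  have hQ (v : n → ℝ) : v ⬝ᵥ A *ᵥ v = Q v := (toLinearMap₂'_apply' A v v).symm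
  have hQ_nonneg (v : n → ℝ) : 0 ≤ Q v := by
    simpa [hQ] using hA.posSemidef.dotProduct_mulVec_nonneg v
  have hcont : Continuous fun x => Real.exp (-Q (x - μ) / 2) := by
    simp only [← hQ]; fun_prop
  have hmeas : MeasurableSet {x : n → ℝ | Q (x - a) ≤ r ^ 2} := by
    refine measurableSet_le ?_ measurable_const
    simp only [← hQ]; fun_prop
  have hfin : volume {x : n → ℝ | Q (x - a) ≤ r ^ 2} ≠ ⊤ := by
    simp only [← hQ]
    rw [hA.volume_setOf_dotProduct_mulVec_le a hr]
    finiteness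
  simp only [hQ]
  refine mul_measureReal_le_setIntegral_of_le_average_sub_left (b := a + a) hmeas hfin ?_ ?_ ?_
  · ext x
    simp only [Set.mem_preimage, Set.mem_ofPred_eq]
    rw [show a + a - x - a = -(x - a) by abel, Q.map_neg]
  · refine Measure.integrableOn_of_bounded hfin hcont.aestronglyMeasurable (M := 1)
      (Filter.Eventually.of_forall fun x => ?_)
    rw [Real.norm_eq_abs, Real.abs_exp, Real.exp_le_one_iff]
    linarith [hQ_nonneg (x - μ)]
  · intro x hx
    have h := Q.two_mul_exp_le_exp_add_exp (a - μ) (x - a)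
    rw [show a - μ + (x - a) = x - μ by abel, show a - μ - (x - a) = a + a - x - μ by abel] at h
    have : Real.exp (-(Q (a - μ) + r ^ 2) / 2) ≤ Real.exp (-(Q (a - μ) + Q (x - a)) / 2) := by
      gcongr; exact hx
    linarith

end Matrix.PosDef

/-- Prior concentration for a multivariate Gaussian `N_p(μ, Σ)` with `Σ` positive
definite: writing `L = λ_max(Σ)` and `Δ² = (β₀-μ)ᵀ Σ⁻¹ (β₀-μ)`,
`P(‖β - β₀‖₂ ≤ c) ≥ (2^{-p/2}/Γ(p/2+1))·(c/√L)^p·exp(-(Δ² + c²/L)/2)`. -/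
theorem gaussian_prior_concentration (p : ℕ)
    (μv β₀ : Fin p → ℝ) (S : Matrix (Fin p) (Fin p) ℝ) (hS : S.PosDef)
    (c : ℝ) (hc : 0 < c) (L : ℝ)
    (hL : IsGreatest {l : ℝ | ∃ i, hS.isHermitian.eigenvalues i = l} L) :
    (2 : ℝ) ^ (-(p : ℝ) / 2) / Real.Gamma ((p : ℝ) / 2 + 1) *
        (c / Real.sqrt L) ^ p *
        Real.exp (-((β₀ - μv) ⬝ᵥ (S⁻¹ *ᵥ (β₀ - μv)) + c ^ 2 / L) / 2) ≤
      ∫ x in {x : Fin p → ℝ | Real.sqrt (∑ i, (x i - β₀ i) ^ 2) ≤ c},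
        (Real.sqrt ((2 * Real.pi) ^ p * S.det))⁻¹ *
          Real.exp (-((x - μv) ⬝ᵥ (S⁻¹ *ᵥ (x - μv))) / 2) := by
  obtain ⟨⟨i, hi⟩, hmax⟩ := hL
  have : Nonempty (Fin p) := ⟨i⟩
  have hL0 : 0 < L := hi ▸ hS.eigenvalues_pos i
  set r := c / √L
  have hr2 : r ^ 2 = c ^ 2 / L := by rw [div_pow, Real.sq_sqrt hL0.le]
  set E := {x : Fin p → ℝ | (x - β₀) ⬝ᵥ S⁻¹ *ᵥ (x - β₀) ≤ r ^ 2}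
  have hvolE : volume.real E = √S.det * (r ^ p * (√Real.pi ^ p / Real.Gamma (p / 2 + 1))) := by
    rw [measureReal_def, hS.inv.volume_setOf_dotProduct_mulVec_le β₀ (by positivity),
      det_nonsing_inv, Ring.inverse_eq_inv', Real.sqrt_inv, inv_inv, Fintype.card_fin]
    simp only [ENNReal.toReal_mul, ENNReal.toReal_pow]
    rw [ENNReal.toReal_ofReal (by positivity), ENNReal.toReal_ofReal (by positivity),
      ENNReal.toReal_ofReal (by positivity)]
  have hdet : 0 < √S.det := Real.sqrt_pos.mpr hS.det_pos
  calc _ = (√((2 * Real.pi) ^ p * S.det))⁻¹ * (Real.exp (-((β₀ - μv) ⬝ᵥ S⁻¹ *ᵥ (β₀ - μv)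
          + r ^ 2) / 2) * volume.real E) := by
        rw [hvolE, hr2, Real.sqrt_two_mul_pi_pow_mul, neg_div, Real.rpow_neg zero_le_two]
        field_simp
    _ ≤ (√((2 * Real.pi) ^ p * S.det))⁻¹ *
        ∫ x in E, Real.exp (-((x - μv) ⬝ᵥ S⁻¹ *ᵥ (x - μv)) / 2) := by
        gcongr
        exact hS.inv.exp_mul_measureReal_le_setIntegral_exp β₀ μv (by positivity)
    _ = ∫ x in E, (√((2 * Real.pi) ^ p * S.det))⁻¹ *
        Real.exp (-((x - μv) ⬝ᵥ S⁻¹ *ᵥ (x - μv)) / 2) := (integral_const_mul _ _).symm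
    _ ≤ _ := by
        have hE_sub :=
          hS.setOf_dotProduct_inv_mulVec_le_subset hL0 (fun j => hmax ⟨j, rfl⟩) β₀ hc.le
        refine setIntegral_mono_set ?_ (Filter.Eventually.of_forall fun x => by positivity)
          hE_sub.eventuallyLE
        exact ContinuousOn.integrableOn_compact (isCompact_setOf_sqrt_sum_sq_sub_le β₀ c)
          (by fun_prop)
end

section
/- Cluster points of EM iterates are fixed points: let Ξ ⊆ ℝ^n be closed, H : Ξ → Ξ continuous, and L, Q continuous with L(ξ) ≥ Q(ξ | v) for all ξ, v, equality iff ξ = v, and suppose H(v) uniquely maximizes Q(· | v). If ξ^{(t+1)} = H(ξ^{(t)}), the sequence {ξ^{(t)}} lies in a compact set, and L(ξ^{(t)}) converges to a limit ℓ, then every cluster point ξ* of {ξ^{(t)}} satisfies H(ξ*) = ξ*. -/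
/-! The EM map never decreases `L`: `L v = Q(v | v) ≤ Q(H v | v) ≤ L(H v)`, and if `L` does not
increase then the last inequality is an equality, which forces `H v = v`. Along a subsequence
`ξ^{(t_j)} → ξ*`, continuity gives `ξ^{(t_j + 1)} → H ξ*`, so both `L ξ*` and `L (H ξ*)` equal the
limit `ℓ` of `L(ξ^{(t)})`; hence `ξ*` is fixed. -/

open Filter Topology Set

section Ascent

variable {X : Type*} {S : Set X} {H : X → X} {L : X → ℝ} {Q : X → X → ℝ}

theorem map_eq_of_map_le_of_minorizes (hminor : ∀ ξ ∈ S, ∀ v ∈ S, Q ξ v ≤ L ξ)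
    (heq : ∀ ξ ∈ S, ∀ v ∈ S, (Q ξ v = L ξ ↔ ξ = v)) (hmax : ∀ v ∈ S, Q v v ≤ Q (H v) v)
    (hHmaps : MapsTo H S S) {v : X} (hv : v ∈ S) (hle : L (H v) ≤ L v) : H v = v := by
  have hQ : Q (H v) v = L (H v) := by
    have hQself : Q v v = L v := (heq v hv v hv).2 rfl
    linarith [hmax v hv, hminor (H v) (hHmaps hv) v hv]
  exact (heq (H v) (hHmaps hv) v hv).1 hQ

end Ascent

section Subsequence

variable {X Y : Type*} [TopologicalSpace X] [TopologicalSpace Y] {S : Set X} {u : ℕ → X}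
  {ψ : ℕ → ℕ} {x : X}

theorem apply_eq_of_tendsto_subseq [T2Space Y] {f : X → Y} {y : Y}
    (hf : ContinuousWithinAt f S x) (hu : ∀ t, u t ∈ S) (hψ : Tendsto ψ atTop atTop)
    (hux : Tendsto (fun j => u (ψ j)) atTop (𝓝 x)) (hfu : Tendsto (fun t => f (u t)) atTop (𝓝 y)) :
    f x = y :=
  tendsto_nhds_unique
    (hf.tendsto.comp (tendsto_nhdsWithin_of_tendsto_nhds_of_eventually_within _ hux
      (Eventually.of_forall fun j => hu (ψ j))))
    (hfu.comp hψ)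

theorem tendsto_succ_of_tendsto_of_iterate {H : X → X} (hH : ContinuousWithinAt H S x)
    (hu : ∀ t, u t ∈ S) (hiter : ∀ t, u (t + 1) = H (u t))
    (hux : Tendsto (fun j => u (ψ j)) atTop (𝓝 x)) :
    Tendsto (fun j => u (ψ j + 1)) atTop (𝓝 (H x)) := by
  simpa only [hiter, Function.comp_def] using
    hH.tendsto.comp (tendsto_nhdsWithin_of_tendsto_nhds_of_eventually_within _ hux
      (Eventually.of_forall fun j => hu (ψ j)))

end Subsequence

theorem em_cluster_points_are_fixed_general {n : ℕ}
    (S : Set (Fin n → ℝ)) (hScl : IsClosed S)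
    (H : (Fin n → ℝ) → (Fin n → ℝ)) (hHmaps : Set.MapsTo H S S)
    (hHcont : ContinuousOn H S)
    (L : (Fin n → ℝ) → ℝ) (hLcont : ContinuousOn L S)
    (Q : (Fin n → ℝ) → (Fin n → ℝ) → ℝ)
    (hminor : ∀ ξ ∈ S, ∀ v ∈ S, Q ξ v ≤ L ξ)
    (heq : ∀ ξ ∈ S, ∀ v ∈ S, (Q ξ v = L ξ ↔ ξ = v))
    (hmax : ∀ v ∈ S, ∀ ξ ∈ S, Q ξ v ≤ Q (H v) v ∧ (Q ξ v = Q (H v) v → ξ = H v))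
    (seq : ℕ → Fin n → ℝ) (hseqS : ∀ t, seq t ∈ S)
    (hiter : ∀ t, seq (t + 1) = H (seq t))
    (l : ℝ) (hconv : Filter.Tendsto (fun t => L (seq t)) Filter.atTop (nhds l)) :
    ∀ ξstar : Fin n → ℝ,
      (∃ φ : ℕ → ℕ, StrictMono φ ∧
        Filter.Tendsto (fun j => seq (φ j)) Filter.atTop (nhds ξstar)) →
      H ξstar = ξstar := by
  rintro ξstar ⟨φ, hφ, htend⟩
  have hξS : ξstar ∈ S := hScl.mem_of_tendsto htend (Eventually.of_forall fun j => hseqS (φ j))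
  have htendH : Tendsto (fun j => seq (φ j + 1)) atTop (𝓝 (H ξstar)) :=
    tendsto_succ_of_tendsto_of_iterate (hHcont ξstar hξS) hseqS hiter htend
  have hLξ : L ξstar = l :=
    apply_eq_of_tendsto_subseq (hLcont ξstar hξS) hseqS hφ.tendsto_atTop htend hconv
  have hLHξ : L (H ξstar) = l :=
    apply_eq_of_tendsto_subseq (hLcont (H ξstar) (hHmaps hξS)) hseqS
      (tendsto_atTop_mono (fun j => Nat.le_succ (φ j)) hφ.tendsto_atTop) htendH hconv
  exact map_eq_of_map_le_of_minorizes hminor heq (fun v hv => (hmax v hv v hv).1) hHmaps hξS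
    (hLHξ.trans hLξ.symm).le

/-- Cluster points of EM iterates are fixed points: with `Ξ ⊆ ℝⁿ` closed,
`H : Ξ → Ξ` continuous, `L`, `Q` continuous, `L(ξ) ≥ Q(ξ|v)` with equality iff
`ξ = v`, `H v` the unique maximizer of `Q(·|v)`, iterates `ξ^{(t+1)} = H(ξ^{(t)})`
lying in a compact set, and `L(ξ^{(t)}) → ℓ`, every cluster point `ξ*` of the
iterates satisfies `H(ξ*) = ξ*`. -/
theorem em_cluster_points_are_fixed {n : ℕ}
    (S : Set (Fin n → ℝ)) (hScl : IsClosed S)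
    (H : (Fin n → ℝ) → (Fin n → ℝ)) (hHmaps : Set.MapsTo H S S)
    (hHcont : ContinuousOn H S)
    (L : (Fin n → ℝ) → ℝ) (hLcont : ContinuousOn L S)
    (Q : (Fin n → ℝ) → (Fin n → ℝ) → ℝ)
    (hQcont : ContinuousOn (fun pr : (Fin n → ℝ) × (Fin n → ℝ) => Q pr.1 pr.2) (S ×ˢ S))
    (hminor : ∀ ξ ∈ S, ∀ v ∈ S, Q ξ v ≤ L ξ)
    (heq : ∀ ξ ∈ S, ∀ v ∈ S, (Q ξ v = L ξ ↔ ξ = v))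
    (hmax : ∀ v ∈ S, ∀ ξ ∈ S, Q ξ v ≤ Q (H v) v ∧ (Q ξ v = Q (H v) v → ξ = H v))
    (seq : ℕ → Fin n → ℝ) (hseqS : ∀ t, seq t ∈ S)
    (hiter : ∀ t, seq (t + 1) = H (seq t))
    (K : Set (Fin n → ℝ)) (hK : IsCompact K) (hseqK : ∀ t, seq t ∈ K)
    (l : ℝ) (hconv : Filter.Tendsto (fun t => L (seq t)) Filter.atTop (nhds l)) :
    ∀ ξstar : Fin n → ℝ,
      (∃ φ : ℕ → ℕ, StrictMono φ ∧
        Filter.Tendsto (fun j => seq (φ j)) Filter.atTop (nhds ξstar)) →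
      H ξstar = ξstar :=
  em_cluster_points_are_fixed_general S hScl H hHmaps hHcont L hLcont Q hminor heq hmax seq hseqS
    hiter l hconv
end
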